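/- arXiv:1602.05974 — 3 statements merged into one kernel-verified Lean document; each statement's English description precedes it below -/
import Mathlib

section
/- For every positive integer n and every positive multiple m of 2^n - 1, the binary representation of m contains at least n ones (i.e., the Hamming weight of m is at least n). -/
private def w (m : ℕ) : ℕ := (Nat.digits 2 m).count 1

private lemma w_def {x : ℕ} (hx : x ≠ 0) :
    w x = (if x % 2 = 1 then 1 else 0) + w (x / 2) := by
  unfold w
  rw [Nat.digits_def' (by norm_num : 1 < 2) (Nat.pos_of_ne_zero hx)]
  rw [List.count_cons]
  rcases Nat.mod_two_eq_zero_or_one x with h | h <;> simp [h, Nat.add_comm]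

private lemma w_add_le : ∀ s a b : ℕ, a + b ≤ s → w (a + b) ≤ w a + w b := by
  intro s
  induction s with
  | zero =>
    intro a b h
    have ha : a = 0 := by omega
    have hb : b = 0 := by omega
    subst ha; subst hb; simp [w]
  | succ s ih =>
    intro a b h
    rcases Nat.eq_zero_or_pos a with rfl | ha
    · simp
    rcases Nat.eq_zero_or_pos b with rfl | hb
    · simp
    have hab : a + b ≠ 0 := by omega
    rw [w_def hab, w_def (by omega : a ≠ 0), w_def (by omega : b ≠ 0)]
    rcases Nat.mod_two_eq_zero_or_one a with hae | hae <;>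
      rcases Nat.mod_two_eq_zero_or_one b with hbe | hbe
    · have h1 : (a + b) % 2 = 0 := by omega
      have h2 : (a + b) / 2 = a / 2 + b / 2 := by omega
      have := ih (a / 2) (b / 2) (by omega)
      simp [h1, hae, hbe, h2]; omega
    · have h1 : (a + b) % 2 = 1 := by omega
      have h2 : (a + b) / 2 = a / 2 + b / 2 := by omega
      have := ih (a / 2) (b / 2) (by omega)
      simp [h1, hae, hbe, h2]; omega
    · have h1 : (a + b) % 2 = 1 := by omega
      have h2 : (a + b) / 2 = a / 2 + b / 2 := by omega
      have := ih (a / 2) (b / 2) (by omega)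
      simp [h1, hae, hbe, h2]; omega
    · have h1 : (a + b) % 2 = 0 := by omega
      have h2 : (a + b) / 2 = a / 2 + b / 2 + 1 := by omega
      have k1 := ih (a / 2 + b / 2) 1 (by omega)
      have k2 := ih (a / 2) (b / 2) (by omega)
      have hw1 : w 1 = 1 := by simp [w]
      simp [h1, hae, hbe, h2]
      omega

private lemma w_pow_add {k r : ℕ} (hr : r < 2 ^ k) : w (2 ^ k + r) = w r + 1 := by
  have hL : (Nat.digits 2 r).length ≤ k := by
    rcases Nat.eq_zero_or_pos r with rfl | hr0
    · simp
    · rw [Nat.digits_len 2 r (by norm_num) (by omega)]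
      have : Nat.log 2 r < k := Nat.log_lt_of_lt_pow (by omega) hr
      omega
  have key := Nat.digits_append_zeroes_append_digits
    (b := 2) (k := k - (Nat.digits 2 r).length) (m := 1) (n := r)
    (by norm_num) (by norm_num)
  rw [show (Nat.digits 2 r).length + (k - (Nat.digits 2 r).length) = k by omega] at key
  unfold w
  rw [show 2 ^ k + r = r + 2 ^ k * 1 by ring, ← key]
  simp [List.count_append, List.count_replicate]

private lemma w_pow (k : ℕ) : w (2 ^ k) = 1 := by
  have := w_pow_add (k := k) (r := 0) (by positivity)
  simpa [w] using this

private lemma w_pred_pow : ∀ n : ℕ, w (2 ^ n - 1) = n := by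
  intro n
  induction n with
  | zero => simp [w]
  | succ n ih =>
    have h1 : 2 ^ (n + 1) - 1 = 2 * (2 ^ n - 1) + 1 := by
      have : 1 ≤ 2 ^ n := Nat.one_le_two_pow
      rw [pow_succ]; omega
    have h2 : (2 ^ (n + 1) - 1) ≠ 0 := by
      have := Nat.one_le_two_pow (n := n)
      rw [pow_succ]; omega
    rw [w_def (by omega : 2 ^ (n+1) - 1 ≠ 0)]
    rw [h1]
    have : (2 * (2 ^ n - 1) + 1) % 2 = 1 := by omega
    have hdiv : (2 * (2 ^ n - 1) + 1) / 2 = 2 ^ n - 1 := by omega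
    simp [this, hdiv, ih]; omega

theorem stmt_0 (n m : ℕ) (hn : 0 < n) (hm : 0 < m) (hdvd : (2 ^ n - 1) ∣ m) :
    n ≤ (Nat.digits 2 m).count 1 := by
  induction m using Nat.strong_induction_on with
  | _ m ih =>
  by_cases hlt : m < 2 ^ n
  · -- then m = 2^n - 1
    obtain ⟨c, rfl⟩ := hdvd
    have h1 : 1 ≤ 2 ^ n := Nat.one_le_two_pow
    have h2 : 2 ≤ 2 ^ n := by
      calc 2 = 2 ^ 1 := rfl
      _ ≤ 2 ^ n := Nat.pow_le_pow_right (by norm_num) hn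
    have hc0 : 0 < c := by
      rcases Nat.eq_zero_or_pos c with rfl | h
      · simp at hm
      · exact h
    have hc : c = 1 := by
      by_contra hc
      have h22 : (2 ^ n - 1) * 2 ≤ (2 ^ n - 1) * c := Nat.mul_le_mul_left _ (by omega)
      omega
    subst hc
    rw [mul_one]
    exact (w_pred_pow n).ge
  · push_neg at hlt
    set k := Nat.log 2 m with hk
    have hkle : 2 ^ k ≤ m := Nat.pow_log_le_self 2 (by omega)
    have hklt : m < 2 ^ (k + 1) := Nat.lt_pow_succ_log_self (by norm_num) m
    have hnk : n ≤ k := by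
      by_contra hc
      push_neg at hc
      have : 2 ^ (k + 1) ≤ 2 ^ n := Nat.pow_le_pow_right (by norm_num) (by omega)
      omega
    set r := m - 2 ^ k with hr
    have hrlt : r < 2 ^ k := by omega
    set m' := r + 2 ^ (k - n) with hm'
    have hpow : 2 ^ (k - n) * 2 ^ n = 2 ^ k := by
      rw [← pow_add]; congr 1; omega
    have h1 : 1 ≤ 2 ^ n := Nat.one_le_two_pow
    have hsplit : m = m' + 2 ^ (k - n) * (2 ^ n - 1) := by
      have : 2 ^ (k - n) * (2 ^ n - 1) = 2 ^ k - 2 ^ (k - n) := by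
        rw [Nat.mul_sub, hpow, mul_one]
      have hle : 2 ^ (k - n) ≤ 2 ^ k := Nat.pow_le_pow_right (by norm_num) (by omega)
      omega
    have hdvd' : (2 ^ n - 1) ∣ m' := by
      have h3 : (2 ^ n - 1) ∣ 2 ^ (k - n) * (2 ^ n - 1) + m' := by
        rwa [hsplit, add_comm] at hdvd
      exact (Nat.dvd_add_right (dvd_mul_left _ _)).mp h3
    have hltm : m' < m := by
      have h2 : 2 ^ (k - n) < 2 ^ k := Nat.pow_lt_pow_right (by norm_num) (by omega)
      omega
    have hposm' : 0 < m' := by positivity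
    have hIH : n ≤ (Nat.digits 2 m').count 1 := ih m' hltm hposm' hdvd'
    have hwm : w m = w r + 1 := by
      rw [show m = 2 ^ k + r by omega]; exact w_pow_add hrlt
    have hwm' : w m' ≤ w m := by
      have h4 := w_add_le (r + 2 ^ (k - n)) r (2 ^ (k - n)) le_rfl
      rw [w_pow, ← hm'] at h4
      omega
    calc n ≤ (Nat.digits 2 m').count 1 := hIH
    _ = w m' := rfl
    _ ≤ w m := hwm'
end

section
/- Let k ≥ 2 and n be positive integers with Ω(2^n − 1) < log n / log k, where Ω counts prime factors with multiplicity. Then there exists a prime q dividing 2^n − 1 such that no sum ε₁·2^{s₁} + ⋯ + ε_k·2^{s_k} with ε_i ∈ {0,1}, not all zero, and nonnegative integers s_i, is divisible by q. -/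
/-!
If every prime factor `q` of `N = 2 ^ n - 1` divided a nonzero sum of at most `k` powers of two,
multiplying these sums over the `Ω(N)` prime factors would give a nonzero multiple of `N` written
as a sum of at most `k ^ Ω(N) < n` powers of two. But a positive multiple of `N` needs at least `n`
powers of two: reducing the exponents mod `n` and merging pairs `2 ^ a + 2 ^ a = 2 ^ (a + 1)`
(again mod `n`) preserves the class mod `N` without increasing the count, and ends with distinct
powers `2 ^ a`, `a < n`, whose sum is at most `N = 1 + 2 + ⋯ + 2 ^ (n - 1)`, hence equal to it.
-/

open Multiset

def twoPowSum (m : Multiset ℕ) : ℕ := (m.map (2 ^ ·)).sum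

@[simp]
lemma twoPowSum_zero : twoPowSum 0 = 0 := rfl

@[simp]
lemma twoPowSum_cons (a : ℕ) (m : Multiset ℕ) :
    twoPowSum (a ::ₘ m) = 2 ^ a + twoPowSum m := by
  simp [twoPowSum]

lemma twoPowSum_map_add_product (m₁ m₂ : Multiset ℕ) :
    twoPowSum ((m₁ ×ˢ m₂).map fun p ↦ p.1 + p.2) = twoPowSum m₁ * twoPowSum m₂ := by
  induction m₁ using Multiset.induction with
  | empty => simp
  | cons a m ih =>
    simp only [twoPowSum, map_map, Function.comp_def, pow_add] at ih ⊢
    simp [cons_product, ih, sum_map_mul_left, add_mul]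

lemma pow_modEq_pow_mod {b : ℕ} (hb : 0 < b) (a n : ℕ) : b ^ a ≡ b ^ (a % n) [MOD b ^ n - 1] := by
  have hbn : b ^ n ≡ 1 [MOD b ^ n - 1] :=
    (Nat.modEq_iff_dvd' (Nat.one_le_pow _ _ hb)).2 dvd_rfl |>.symm
  calc b ^ a = (b ^ n) ^ (a / n) * b ^ (a % n) := by rw [← pow_mul, ← pow_add, Nat.div_add_mod]
    _ ≡ 1 ^ (a / n) * b ^ (a % n) [MOD b ^ n - 1] := (hbn.pow _).mul_right _
    _ = b ^ (a % n) := by rw [one_pow, one_mul]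

lemma twoPowSum_modEq_map_mod (n : ℕ) (m : Multiset ℕ) :
    twoPowSum m ≡ twoPowSum (m.map (· % n)) [MOD 2 ^ n - 1] := by
  rw [twoPowSum, twoPowSum, map_map]
  exact Nat.ModEq.multisetSum_map fun a _ ↦ pow_modEq_pow_mod two_pos a n

lemma Finset.eq_range_of_two_pow_sub_one_dvd_sum {n : ℕ} {s : Finset ℕ}
    (hs : s ⊆ Finset.range n) (hne : s.Nonempty) (hdvd : 2 ^ n - 1 ∣ ∑ a ∈ s, 2 ^ a) :
    s = Finset.range n := by
  have hrange : ∑ a ∈ Finset.range n, 2 ^ a = 2 ^ n - 1 := by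
    simpa using Nat.geomSum_eq le_rfl n
  by_contra hne'
  obtain ⟨b, hb, hbs⟩ := Finset.exists_of_ssubset (hs.ssubset_of_ne hne')
  have hlt : ∑ a ∈ s, 2 ^ a < 2 ^ n - 1 :=
    hrange ▸ Finset.sum_lt_sum_of_subset hs hb hbs (by positivity) fun _ _ _ ↦ Nat.zero_le _
  have hpos : 0 < ∑ a ∈ s, 2 ^ a := Finset.sum_pos (fun _ _ ↦ by positivity) hne
  exact hlt.not_ge (Nat.le_of_dvd hpos hdvd)

theorem le_card_of_dvd_twoPowSum_of_forall_lt {n : ℕ} {m : Multiset ℕ} (hm : m ≠ 0)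
    (hlt : ∀ a ∈ m, a < n) (hdvd : 2 ^ n - 1 ∣ twoPowSum m) : n ≤ card m := by
  by_cases hnd : m.Nodup
  · have hs : (⟨m, hnd⟩ : Finset ℕ) = Finset.range n :=
      Finset.eq_range_of_two_pow_sub_one_dvd_sum (fun a ha ↦ Finset.mem_range.2 (hlt a ha))
        (exists_mem_of_ne_zero hm) hdvd
    simpa using (congrArg Finset.card hs).ge
  · obtain ⟨a, t, rfl⟩ : ∃ a t, m = a ::ₘ a ::ₘ t := by
      simpa [nodup_iff_ne_cons_cons] using hnd
    have hn : 0 < n := (hlt a (mem_cons_self _ _)).pos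
    have hmerge : twoPowSum (a ::ₘ a ::ₘ t) ≡ twoPowSum ((a + 1) % n ::ₘ t) [MOD 2 ^ n - 1] := by
      simp only [twoPowSum_cons, ← add_assoc, ← two_mul, ← pow_succ']
      exact (pow_modEq_pow_mod two_pos _ _).add_right _
    have hlt' : ∀ b ∈ (a + 1) % n ::ₘ t, b < n := by
      intro b hb
      rcases mem_cons.1 hb with rfl | hb
      exacts [Nat.mod_lt _ hn, hlt b (mem_cons_of_mem (mem_cons_of_mem hb))]
    have ih := le_card_of_dvd_twoPowSum_of_forall_lt cons_ne_zero hlt'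
      ((hmerge.dvd_iff dvd_rfl).1 hdvd)
    simp only [card_cons] at ih ⊢
    omega
termination_by card m
decreasing_by simp_all

theorem le_card_of_dvd_twoPowSum {n : ℕ} {m : Multiset ℕ} (hm : m ≠ 0)
    (hdvd : 2 ^ n - 1 ∣ twoPowSum m) : n ≤ card m := by
  rcases n.eq_zero_or_pos with rfl | hn
  · exact Nat.zero_le _
  · simpa using le_card_of_dvd_twoPowSum_of_forall_lt (m := m.map (· % n)) (by simpa using hm)
      (by simp [Nat.mod_lt _ hn]) (((twoPowSum_modEq_map_mod n m).dvd_iff dvd_rfl).1 hdvd)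

lemma exists_twoPowSum_dvd_prod {k : ℕ} (L : List ℕ)
    (h : ∀ q ∈ L, ∃ m : Multiset ℕ, m ≠ 0 ∧ card m ≤ k ∧ q ∣ twoPowSum m) :
    ∃ m : Multiset ℕ, m ≠ 0 ∧ card m ≤ k ^ L.length ∧ L.prod ∣ twoPowSum m := by
  induction L with
  | nil => exact ⟨{0}, by simp, by simp, by simp⟩
  | cons q L ih =>
    obtain ⟨m₁, hm₁, hc₁, hd₁⟩ := h q List.mem_cons_self
    obtain ⟨m₂, hm₂, hc₂, hd₂⟩ := ih fun r hr ↦ h r (List.mem_cons_of_mem _ hr)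
    refine ⟨(m₁ ×ˢ m₂).map fun p ↦ p.1 + p.2, ?_, ?_, ?_⟩
    · simpa [← card_pos] using Nat.mul_pos (card_pos.2 hm₁) (card_pos.2 hm₂)
    · rw [card_map, card_product, List.length_cons, pow_succ']
      exact Nat.mul_le_mul hc₁ hc₂
    · rw [twoPowSum_map_add_product, List.prod_cons]
      exact mul_dvd_mul hd₁ hd₂

lemma exists_twoPowSum_eq_sum_mul_two_pow {ι : Type*} [Fintype ι] (ε s : ι → ℕ)
    (hε : ∀ i, ε i ≤ 1) (hε₁ : ∃ i, ε i = 1) :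
    ∃ m : Multiset ℕ, m ≠ 0 ∧ card m ≤ Fintype.card ι ∧ twoPowSum m = ∑ i, ε i * 2 ^ s i := by
  obtain ⟨i₀, hi₀⟩ := hε₁
  refine ⟨(Finset.univ.filter fun i ↦ ε i = 1).val.map s, ?_, ?_, ?_⟩
  · simpa [← Finset.nonempty_iff_ne_empty] using ⟨i₀, hi₀⟩
  · rw [card_map]
    exact (Finset.card_filter_le _ _).trans_eq Finset.card_univ
  · rw [twoPowSum, map_map, Finset.sum_map_val, Finset.sum_filter]
    refine Finset.sum_congr rfl fun i _ ↦ ?_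
    rcases Nat.le_one_iff_eq_zero_or_eq_one.1 (hε i) with h | h <;> simp [h]

lemma pow_lt_of_lt_log_div_log {k n Ω : ℕ} (hk : 1 < k)
    (h : (Ω : ℝ) < Real.log n / Real.log k) : k ^ Ω < n := by
  have hlogk : 0 < Real.log k := Real.log_pos (by exact_mod_cast hk)
  have h' : Ω * Real.log k < Real.log n := (lt_div_iff₀ hlogk).1 h
  have hn : 0 < n := by
    rcases n.eq_zero_or_pos with rfl | hn
    · simp only [CharP.cast_eq_zero, Real.log_zero] at h'
      exact absurd h' (not_lt.2 (by positivity))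
    · exact hn
  exact_mod_cast (Real.pow_lt_iff_lt_log (by positivity) (by positivity)).2 h'

theorem stmt_1_general (k n : ℕ) (hk : 2 ≤ k)
    (hΩ : ((2 ^ n - 1).primeFactorsList.length : ℝ) < Real.log n / Real.log k) :
    ∃ q : ℕ, q.Prime ∧ q ∣ 2 ^ n - 1 ∧
      ∀ (ε : Fin k → ℕ) (s : Fin k → ℕ), (∀ i, ε i ≤ 1) → (∃ i, ε i = 1) →
        ¬ q ∣ ∑ i, ε i * 2 ^ s i := by
  have hkn : k ^ (2 ^ n - 1).primeFactorsList.length < n := pow_lt_of_lt_log_div_log hk hΩ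
  have hN : 2 ^ n - 1 ≠ 0 := by
    have := Nat.one_lt_two_pow (n := n) (by omega)
    omega
  by_contra! h
  obtain ⟨m, hm, hcard, hdvd⟩ := exists_twoPowSum_dvd_prod (k := k) (2 ^ n - 1).primeFactorsList
    fun q hq ↦ by
      obtain ⟨ε, s, hε, hε₁, hqε⟩ :=
        h q (Nat.prime_of_mem_primeFactorsList hq) (Nat.dvd_of_mem_primeFactorsList hq)
      obtain ⟨m, hm, hcard, hsum⟩ := exists_twoPowSum_eq_sum_mul_two_pow ε s hε hε₁
      exact ⟨m, hm, by simpa using hcard, hsum ▸ hqε⟩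
  rw [Nat.prod_primeFactorsList hN] at hdvd
  exact (le_card_of_dvd_twoPowSum hm hdvd).not_gt (hcard.trans_lt hkn)

theorem stmt_1 (k n : ℕ) (hk : 2 ≤ k) (hn : 0 < n)
    (hΩ : ((2 ^ n - 1).primeFactorsList.length : ℝ) < Real.log n / Real.log k) :
    ∃ q : ℕ, q.Prime ∧ q ∣ 2 ^ n - 1 ∧
      ∀ (ε : Fin k → ℕ) (s : Fin k → ℕ), (∀ i, ε i ≤ 1) → (∃ i, ε i = 1) →
        ¬ q ∣ ∑ i, ε i * 2 ^ s i :=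
  stmt_1_general k n hk hΩ
end

section
/- Let k ≥ 2 and n be positive integers with Ω(2^n − 1) < log n / log k. Then there exists a prime q dividing 2^n − 1 such that every positive multiple of q has Hamming weight at least k + 1. -/
/-!
The binary weight is subadditive and submultiplicative. Folding a multiple `m = 2ⁿ a + b`
(`b < 2ⁿ`) of `2ⁿ - 1` into the smaller multiple `a + b` never increases the weight, and the
folding ends at `2ⁿ - 1` itself, so every positive multiple of `2ⁿ - 1` has weight at least `n`.
If each of the `Ω(2ⁿ - 1)` prime factors of `2ⁿ - 1` had a positive multiple of weight at most
`k`, the product of these multiples would be a positive multiple of `2ⁿ - 1` of weight at most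
`k ^ Ω(2ⁿ - 1)`, forcing `n ≤ k ^ Ω(2ⁿ - 1)`, i.e. `log n / log k ≤ Ω(2ⁿ - 1)`.
-/

def binaryWeight (m : ℕ) : ℕ := (Nat.digits 2 m).count 1

@[simp]
lemma binaryWeight_zero : binaryWeight 0 = 0 := rfl

@[simp]
lemma binaryWeight_one : binaryWeight 1 = 1 := rfl

lemma binaryWeight_two_mul_add {r : ℕ} (x : ℕ) (hr : r < 2) :
    binaryWeight (2 * x + r) = binaryWeight x + r := by
  by_cases h : r = 0 ∧ x = 0
  · obtain ⟨rfl, rfl⟩ := h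
    rfl
  rw [binaryWeight, add_comm, Nat.digits_add 2 one_lt_two r x hr (by omega), List.count_cons]
  interval_cases r <;> simp [binaryWeight]

@[simp]
lemma binaryWeight_two_mul (x : ℕ) : binaryWeight (2 * x) = binaryWeight x :=
  binaryWeight_two_mul_add x two_pos

lemma binaryWeight_eq_div_two_add_mod (m : ℕ) :
    binaryWeight m = binaryWeight (m / 2) + m % 2 := by
  conv_lhs => rw [← Nat.div_add_mod m 2]
  exact binaryWeight_two_mul_add _ (Nat.mod_lt _ two_pos)

lemma binaryWeight_succ_le (m : ℕ) : binaryWeight (m + 1) ≤ binaryWeight m + 1 := by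
  induction m using Nat.strong_induction_on with
  | _ m ih =>
  obtain ⟨x, rfl | rfl⟩ : ∃ x, m = 2 * x ∨ m = 2 * x + 1 := ⟨m / 2, by omega⟩
  · rw [binaryWeight_two_mul_add x one_lt_two, binaryWeight_two_mul]
  · rcases Nat.eq_zero_or_pos x with rfl | hx
    · decide
    rw [show 2 * x + 1 + 1 = 2 * (x + 1) by ring, binaryWeight_two_mul,
      binaryWeight_two_mul_add x one_lt_two]
    exact (ih x (by omega)).trans (Nat.le_succ _)

lemma binaryWeight_add_le (a b : ℕ) :
    binaryWeight (a + b) ≤ binaryWeight a + binaryWeight b := by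
  induction a using Nat.strong_induction_on generalizing b with
  | _ a ih =>
  rcases Nat.eq_zero_or_pos a with rfl | ha
  · simp
  have hsum := ih (a / 2) (by omega) (b / 2)
  rw [binaryWeight_eq_div_two_add_mod a, binaryWeight_eq_div_two_add_mod b]
  by_cases hcarry : a % 2 + b % 2 < 2
  · rw [show a + b = 2 * (a / 2 + b / 2) + (a % 2 + b % 2) by omega,
      binaryWeight_two_mul_add _ hcarry]
    omega
  · rw [show a + b = 2 * (a / 2 + b / 2 + 1) by omega, binaryWeight_two_mul]
    have := binaryWeight_succ_le (a / 2 + b / 2)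
    omega

lemma binaryWeight_mul_le (a b : ℕ) :
    binaryWeight (a * b) ≤ binaryWeight a * binaryWeight b := by
  induction a using Nat.strong_induction_on with
  | _ a ih =>
  rcases Nat.eq_zero_or_pos a with rfl | ha
  · simp
  obtain ⟨x, r, hr, rfl⟩ : ∃ x r, r < 2 ∧ a = 2 * x + r :=
    ⟨a / 2, a % 2, by omega, by omega⟩
  have hrb : binaryWeight (r * b) = r * binaryWeight b := by interval_cases r <;> simp
  calc binaryWeight ((2 * x + r) * b)
      ≤ binaryWeight (2 * (x * b)) + binaryWeight (r * b) := by
        rw [add_mul, mul_assoc]; exact binaryWeight_add_le _ _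
    _ ≤ binaryWeight x * binaryWeight b + r * binaryWeight b := by
        rw [binaryWeight_two_mul, hrb]; gcongr; exact ih x (by omega)
    _ = binaryWeight (2 * x + r) * binaryWeight b := by
        rw [binaryWeight_two_mul_add x hr, add_mul]

lemma binaryWeight_two_pow_mul_add {b : ℕ} (n a : ℕ) (hb : b < 2 ^ n) :
    binaryWeight (2 ^ n * a + b) = binaryWeight a + binaryWeight b := by
  induction n generalizing b with
  | zero =>
    obtain rfl : b = 0 := by omega
    simp
  | succ n ih =>
    rw [pow_succ] at hb ⊢
    rw [show 2 ^ n * 2 * a + b = 2 * (2 ^ n * a + b / 2) + b % 2 by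
        rw [mul_comm _ 2, mul_assoc]; omega,
      binaryWeight_two_mul_add _ (Nat.mod_lt _ two_pos), ih (by omega),
      binaryWeight_eq_div_two_add_mod b]
    ring

lemma binaryWeight_two_pow_sub_one (n : ℕ) : binaryWeight (2 ^ n - 1) = n := by
  induction n with
  | zero => rfl
  | succ n ih =>
    have := n.one_le_two_pow
    rw [show 2 ^ (n + 1) - 1 = 2 * (2 ^ n - 1) + 1 by rw [pow_succ]; omega,
      binaryWeight_two_mul_add _ one_lt_two, ih]

lemma le_binaryWeight_of_two_pow_sub_one_dvd {n m : ℕ} (hm : 0 < m) (hdvd : 2 ^ n - 1 ∣ m) :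
    n ≤ binaryWeight m := by
  rcases Nat.eq_zero_or_pos n with rfl | hn
  · exact Nat.zero_le _
  induction m using Nat.strong_induction_on with
  | _ m ih =>
  have hN : 2 ^ n - 1 ≤ m := Nat.le_of_dvd hm hdvd
  have hpow : 1 ≤ 2 ^ n := n.one_le_two_pow
  set a := m / 2 ^ n
  set b := m % 2 ^ n
  have hb : b < 2 ^ n := Nat.mod_lt _ (by omega)
  have hm_eq : m = 2 ^ n * a + b := (Nat.div_add_mod m (2 ^ n)).symm
  rcases Nat.eq_zero_or_pos a with ha | ha
  · obtain rfl : m = 2 ^ n - 1 := by rw [ha] at hm_eq; omega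
    rw [binaryWeight_two_pow_sub_one]
  have hfold : m = (2 ^ n - 1) * a + (a + b) := by
    rw [Nat.sub_one_mul]; have := Nat.le_mul_of_pos_left a (by omega : 0 < 2 ^ n); omega
  have hlt : a + b < m := by
    have := Nat.mul_le_mul_right a (Nat.one_lt_two_pow hn.ne')
    omega
  calc n ≤ binaryWeight (a + b) :=
        ih _ hlt (by omega) ((Nat.dvd_add_right (dvd_mul_right _ _)).mp (hfold ▸ hdvd))
    _ ≤ binaryWeight a + binaryWeight b := binaryWeight_add_le a b
    _ = binaryWeight m := by rw [hm_eq, binaryWeight_two_pow_mul_add n a hb]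

lemma exists_pos_prod_dvd_binaryWeight_le_pow {k : ℕ} (l : List ℕ)
    (hl : ∀ q ∈ l, ∃ m, 0 < m ∧ q ∣ m ∧ binaryWeight m ≤ k) :
    ∃ M, 0 < M ∧ l.prod ∣ M ∧ binaryWeight M ≤ k ^ l.length := by
  induction l with
  | nil => exact ⟨1, one_pos, by simp, by simp⟩
  | cons q t ih =>
    obtain ⟨m, hm, hqm, hwm⟩ := hl q List.mem_cons_self
    obtain ⟨M, hM, htM, hwM⟩ := ih fun r hr => hl r (List.mem_cons_of_mem _ hr)
    refine ⟨m * M, Nat.mul_pos hm hM, by simpa using mul_dvd_mul hqm htM, ?_⟩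
    calc binaryWeight (m * M) ≤ binaryWeight m * binaryWeight M := binaryWeight_mul_le m M
      _ ≤ k * k ^ t.length := Nat.mul_le_mul hwm hwM
      _ = k ^ (q :: t).length := by rw [List.length_cons, pow_succ, mul_comm]

lemma Real.log_div_log_le_of_le_pow {n k L : ℕ} (h : n ≤ k ^ L) :
    Real.log n / Real.log k ≤ L := by
  refine div_le_of_le_mul₀ (Real.log_natCast_nonneg k) L.cast_nonneg ?_
  rcases Nat.eq_zero_or_pos n with rfl | hn
  · simpa using mul_nonneg L.cast_nonneg (Real.log_natCast_nonneg k)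
  calc Real.log n ≤ Real.log ((k : ℝ) ^ L) :=
        Real.log_le_log (by exact_mod_cast hn) (by exact_mod_cast h)
    _ = L * Real.log k := by rw [Real.log_pow]

theorem stmt_2_general (k n : ℕ)
    (hΩ : ((2 ^ n - 1).primeFactorsList.length : ℝ) < Real.log n / Real.log k) :
    ∃ q : ℕ, q.Prime ∧ q ∣ 2 ^ n - 1 ∧
      ∀ m : ℕ, 0 < m → q ∣ m → k + 1 ≤ (Nat.digits 2 m).count 1 := by
  by_contra! hlight
  have hle : n ≤ k ^ (2 ^ n - 1).primeFactorsList.length := by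
    rcases Nat.eq_zero_or_pos n with rfl | hn
    · exact Nat.zero_le _
    obtain ⟨M, hM, hdvd, hwM⟩ := exists_pos_prod_dvd_binaryWeight_le_pow _ fun q hq => by
      obtain ⟨m, hm, hqm, hwm⟩ :=
        hlight q (Nat.prime_of_mem_primeFactorsList hq) (Nat.dvd_of_mem_primeFactorsList hq)
      exact ⟨m, hm, hqm, Nat.le_of_lt_succ hwm⟩
    rw [Nat.prod_primeFactorsList (by have := Nat.one_lt_two_pow hn.ne'; omega)] at hdvd
    exact (le_binaryWeight_of_two_pow_sub_one_dvd hM hdvd).trans hwM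
  exact hΩ.not_ge (Real.log_div_log_le_of_le_pow hle)

theorem stmt_2 (k n : ℕ) (hk : 2 ≤ k) (hn : 0 < n)
    (hΩ : ((2 ^ n - 1).primeFactorsList.length : ℝ) < Real.log n / Real.log k) :
    ∃ q : ℕ, q.Prime ∧ q ∣ 2 ^ n - 1 ∧
      ∀ m : ℕ, 0 < m → q ∣ m → k + 1 ≤ (Nat.digits 2 m).count 1 :=
  stmt_2_general k n hΩ
end
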